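/- Every automorphism of the free group F_n on n generators can be written as a finite composition of elementary Nielsen transformations (permutations of generators, inversion of a generator, and replacing a generator x_i by x_i·x_j for j ≠ i). -/

import Mathlib

/-- An elementary Nielsen transformation of the free group on `Fin n`:
either a permutation (swap) of two generators, inversion of one generator,
or multiplication of one generator by another. -/
def IsElementaryNielsen {n : ℕ} (φ : MulAut (FreeGroup (Fin n))) : Prop :=
  (∃ i j : Fin n, ∀ k, φ (FreeGroup.of k) = FreeGroup.of (Equiv.swap i j k)) ∨
  (∃ i : Fin n, ∀ k, φ (FreeGroup.of k) =
      if k = i then (FreeGroup.of i)⁻¹ else FreeGroup.of k) ∨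
  (∃ i j : Fin n, i ≠ j ∧ ∀ k, φ (FreeGroup.of k) =
      if k = i then FreeGroup.of i * FreeGroup.of j else FreeGroup.of k)

/-!
Nielsen reduction. Let `N` be the subgroup generated by the elementary transformations. In the
coset `φ N` choose `Φ` minimising, lexicographically, the total length `∑ |Φ xᵢ|` and then a
tie-breaker comparing the first halves of the words `Φ xᵢ` and `(Φ xᵢ)⁻¹`, read as numbers. Right
multiplication by `N` performs Nielsen moves on the tuple `(Φ xᵢ)`, so by minimality the letters
`(Φ xᵢ)^{±1}` form a Nielsen-reduced set: a product of two of them is never shorter than a factor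
(N1), and in a product of three the middle one is never cancelled exactly half from each side (N2;
this is where the tie-breaker is used). In a reduced product of such letters every factor then
keeps a nonempty middle part, so `Φ` does not shorten words. Hence `Φ⁻¹` sends each generator to a
generator or its inverse, i.e. it is a signed permutation, which lies in `N`; so `φ ∈ N`.
-/

namespace FreeGroup

variable {α : Type*}

theorem mk_singleton_true (a : α) : mk [(a, true)] = of a := rfl

theorem inv_mk_singleton (l : α × Bool) : (mk [l])⁻¹ = mk [(l.1, !l.2)] := by
  rw [inv_mk]
  rfl

theorem mk_singleton_false (a : α) : mk [(a, false)] = (of a)⁻¹ := by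
  rw [of, inv_mk_singleton]
  rfl

theorem mk_singleton_eq_or_eq_inv {l m : α × Bool} (h : l.1 = m.1) :
    mk [m] = mk [l] ∨ mk [m] = (mk [l])⁻¹ := by
  rw [inv_mk_singleton]
  obtain ⟨a, _ | _⟩ := l <;> obtain ⟨b, _ | _⟩ := m <;> simp_all

theorem prod_map_mk_singleton (L : List (α × Bool)) : (L.map fun l => mk [l]).prod = mk L := by
  induction L with
  | nil => rfl
  | cons a L ih => rw [List.map_cons, List.prod_cons, ih, mul_mk, List.singleton_append]

theorem IsReduced.eq_nil_of_invRev_append {L : List (α × Bool)} (h : IsReduced (invRev L ++ L)) :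
    L = [] := by
  rcases L with _ | ⟨a, L⟩
  · rfl
  · have : IsReduced [(a.1, !a.2), a] := h.infix ⟨invRev L, L, by simp [invRev]⟩
    simp [IsReduced] at this

section Words

variable [DecidableEq α]

theorem toWord_mk_singleton (l : α × Bool) : (mk [l]).toWord = [l] := by
  simp [toWord_mk]

theorem mk_singleton_mul_ne_one {a b : α × Bool} (h : a.1 = b.1 → a.2 = b.2) :
    mk [a] * mk [b] ≠ 1 := by
  rw [mul_mk, List.singleton_append, ← toWord_injective.ne_iff, toWord_mk, toWord_one,
    IsReduced.reduce_eq (isReduced_cons_cons.2 ⟨h, .singleton⟩)]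
  simp

theorem norm_le_norm_mul_self (x : FreeGroup α) : x.norm ≤ (x * x).norm := by
  -- `x = c r c⁻¹` with `r` cyclically reduced, and `x * x = c r r c⁻¹` is reduced.
  have hx := congrArg List.length (reduceCyclically.conj_conjugator_reduceCyclically x.toWord)
  have hxx := reduceCyclically.reduce_flatten_replicate (isReduced_toWord (x := x)) 2
  rw [← toWord_pow, pow_two] at hxx
  rw [norm, norm, hxx, ← hx]
  simp only [if_neg two_ne_zero, List.replicate, List.flatten_cons, List.flatten_nil,
    List.append_nil, List.length_append, invRev_length]
  omega

theorem toWord_eq_of_mk_eq_of_length_le {L : List (α × Bool)} {x : FreeGroup α} (h : mk L = x)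
    (hL : L.length ≤ x.norm) : x.toWord = L := by
  subst h
  rw [toWord_mk]
  exact (reduce.red (L := L)).sublist.eq_of_length_le (by rwa [← toWord_mk])

theorem mul_eq_mk_of_cancel {x y : FreeGroup α} {a s c : List (α × Bool)}
    (hx : x.toWord = a ++ s) (hy : y.toWord = invRev s ++ c) : x * y = mk (a ++ c) := by
  rw [← mk_toWord (x := x), ← mk_toWord (x := y), hx, hy, ← mul_mk, ← mul_mk, ← mul_mk,
    ← inv_mk]
  group

theorem norm_mul_add_two_mul_length_le {x y : FreeGroup α} {s : List (α × Bool)}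
    (hx : s <:+ x.toWord) (hy : invRev s <+: y.toWord) :
    (x * y).norm + 2 * s.length ≤ x.norm + y.norm := by
  obtain ⟨a, ha⟩ := hx
  obtain ⟨c, hc⟩ := hy
  have := norm_mk_le (L₁ := a ++ c)
  rw [← mul_eq_mk_of_cancel ha.symm hc.symm] at this
  simp only [norm, ← ha, ← hc, List.length_append, invRev_length] at this ⊢
  omega

theorem exists_reduce_append {L₁ L₂ : List (α × Bool)} (h₁ : IsReduced L₁) (h₂ : IsReduced L₂) :
    ∃ a b c, L₁ = a ++ b ∧ L₂ = invRev b ++ c ∧ reduce (L₁ ++ L₂) = a ++ c := by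
  induction L₂ generalizing L₁ with
  | nil => exact ⟨L₁, [], [], by simp, rfl, by simpa using h₁.reduce_eq⟩
  | cons s L₂ ih =>
    by_cases hs : ∃ L, L₁ = L ++ [(s.1, !s.2)]
    · obtain ⟨L, rfl⟩ := hs
      obtain ⟨a, b, c, rfl, rfl, h⟩ :=
        ih (h₁.infix ⟨[], _, rfl⟩) (h₂.infix ⟨[s], [], by simp⟩)
      refine ⟨a, b ++ [(s.1, !s.2)], c, by simp, by simp [invRev], ?_⟩
      rw [← h, ← reduce.Step.eq (Red.Step.not_rev (L₁ := a ++ b) (x := s.1) (b := s.2))]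
      simp
    · refine ⟨L₁, [], s :: L₂, by simp, by simp, IsReduced.reduce_eq ?_⟩
      refine List.isChain_append.2 ⟨h₁, h₂, fun x hx y hy => ?_⟩
      obtain rfl : s = y := by simpa using hy
      by_contra! h
      have hx' : x = (s.1, !s.2) := Prod.ext h.1 (by simpa [Bool.eq_not] using h.2)
      exact hs ⟨L₁.dropLast, hx' ▸ (List.dropLast_append_getLast? x hx).symm⟩

theorem exists_toWord_mul (x y : FreeGroup α) :
    ∃ a b c, x.toWord = a ++ b ∧ y.toWord = invRev b ++ c ∧ (x * y).toWord = a ++ c := by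
  rw [toWord_mul]
  exact exists_reduce_append isReduced_toWord isReduced_toWord

end Words

section NielsenReduced

variable [DecidableEq α]

/-- Nielsen's conditions (N0), (N1), (N2), the last one in the form: no `v` is cancelled exactly
half by its left and half by its right neighbour. -/
structure IsNielsenReduced (U : Set (FreeGroup α)) : Prop where
  one_notMem : (1 : FreeGroup α) ∉ U
  norm_le_norm_mul : ∀ u ∈ U, ∀ v ∈ U, u * v ≠ 1 → u.norm ≤ (u * v).norm ∧ v.norm ≤ (u * v).norm
  not_cancel_halves : ∀ u ∈ U, ∀ v ∈ U, ∀ w ∈ U, u * v ≠ 1 → v * w ≠ 1 → ∀ p q,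
    v.toWord = p ++ q → p.length = q.length → invRev p <:+ u.toWord → ¬ invRev q <+: w.toWord

def RightCancellable (U : Set (FreeGroup α)) (u : FreeGroup α) (s : List (α × Bool)) : Prop :=
  s = [] ∨ ∃ w ∈ U, u * w ≠ 1 ∧ invRev s <+: w.toWord

namespace IsNielsenReduced

variable {U : Set (FreeGroup α)} (hU : IsNielsenReduced U)
include hU

theorem two_mul_length_le {u v : FreeGroup α} (hu : u ∈ U) (hv : v ∈ U) (huv : u * v ≠ 1)
    {s : List (α × Bool)} (hsu : s <:+ u.toWord) (hsv : invRev s <+: v.toWord) :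
    2 * s.length ≤ u.norm ∧ 2 * s.length ≤ v.norm := by
  have := norm_mul_add_two_mul_length_le hsu hsv
  have := hU.norm_le_norm_mul u hu v hv huv
  omega

theorem two_mul_length_le_of_rightCancellable {u : FreeGroup α} (hu : u ∈ U)
    {s : List (α × Bool)} (hsu : s <:+ u.toWord) (hs : RightCancellable U u s) :
    2 * s.length ≤ u.norm := by
  rcases hs with rfl | ⟨w, hw, huw, hsw⟩
  · simp
  · exact (hU.two_mul_length_le hu hw huw hsu hsw).1

theorem toWord_ne_append {u v : FreeGroup α} (hu : u ∈ U) (hv : v ∈ U) (hvu : v * u ≠ 1)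
    {p s : List (α × Bool)} (hp : invRev p <:+ v.toWord) (hs : RightCancellable U u s) :
    u.toWord ≠ p ++ s := by
  -- By (N1) both `p` and `s` are at most half of `u`, so they are exactly halves, against (N2).
  intro h
  have hpu := (hU.two_mul_length_le hv hu hvu hp (by simp [h])).2
  have hsu := hU.two_mul_length_le_of_rightCancellable hu (h ▸ List.suffix_append _ _) hs
  have hlen : u.norm = p.length + s.length := by rw [norm, h, List.length_append]
  rw [invRev_length] at hpu
  rcases hs with rfl | ⟨w, hw, huw, hsw⟩
  · rw [List.length_nil, add_zero] at hlen
    exact hU.one_notMem (norm_eq_zero.1 (by omega : u.norm = 0) ▸ hu)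
  · exact hU.not_cancel_halves v hv u hu w hw hvu huw p s h (by omega) hp hsw

theorem exists_prefix_of_isChain {u : FreeGroup α} {us : List (FreeGroup α)}
    (hus : ∀ x ∈ u :: us, x ∈ U) (hchain : (u :: us).IsChain (· * · ≠ 1)) :
    ∃ t s, u.toWord = t ++ s ∧ RightCancellable U u s ∧ t <+: (u :: us).prod.toWord ∧
      us.length + t.length ≤ (u :: us).prod.norm := by
  induction us generalizing u with
  | nil => exact ⟨u.toWord, [], by simp, Or.inl rfl, by simp, by simp [norm]⟩
  | cons u' us ih =>
    have hu : u ∈ U := hus u (by simp)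
    have hu' : u' ∈ U := hus u' (by simp)
    have huu' : u * u' ≠ 1 := (List.isChain_cons_cons.1 hchain).1
    obtain ⟨t, s, ht, hs, htP, hlen⟩ :=
      ih (fun x hx => hus x (List.mem_cons_of_mem _ hx)) (List.isChain_cons_cons.1 hchain).2
    set P := (u' :: us).prod
    obtain ⟨a, b, c, hab, hbc, hac⟩ := exists_toWord_mul u P
    have hbP : invRev b <+: P.toWord := ⟨c, hbc.symm⟩
    -- Otherwise `u'` would be cancelled by `u` on the left and by its successor on the right.
    have hbt : b.length < t.length := by
      by_contra! hle
      have htb : t <+: invRev b := List.prefix_of_prefix_length_le htP hbP (by simpa)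
      have : invRev t <:+ u.toWord := by
        obtain ⟨r, hr⟩ := htb
        exact ⟨a ++ invRev r, by rw [hab, ← invRev_invRev (L₁ := b), ← hr, invRev_append,
          List.append_assoc]⟩
      exact hU.toWord_ne_append hu' hu huu' this hs ht
    have hbu' : invRev b <+: u'.toWord :=
      (List.prefix_of_prefix_length_le hbP htP (by simpa using hbt.le)).trans ⟨s, ht.symm⟩
    refine ⟨a, b, hab, Or.inr ⟨u', hu', huu', hbu'⟩, ?_, ?_⟩
    · rw [List.prod_cons, hac]
      exact List.prefix_append _ _
    · have hP : P.norm = b.length + c.length := by rw [norm, hbc]; simp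
      rw [List.prod_cons, norm, hac]
      simp only [List.length_cons, List.length_append]
      omega

theorem length_le_norm_prod {us : List (FreeGroup α)} (hus : ∀ x ∈ us, x ∈ U)
    (hchain : us.IsChain (· * · ≠ 1)) : us.length ≤ us.prod.norm := by
  rcases us with _ | ⟨u, us⟩
  · simp
  obtain ⟨t, s, ht, hs, -, hlen⟩ := hU.exists_prefix_of_isChain hus hchain
  have hu : u ∈ U := hus u (by simp)
  have hsu := hU.two_mul_length_le_of_rightCancellable hu ⟨t, ht.symm⟩ hs
  have hpos : 0 < u.norm := Nat.pos_of_ne_zero fun h => hU.one_notMem (norm_eq_zero.1 h ▸ hu)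
  have : u.norm = t.length + s.length := by rw [norm, ht, List.length_append]
  simp only [List.length_cons]
  omega

end IsNielsenReduced

theorem IsNielsenReduced.norm_le_norm_apply {β : Type*} [DecidableEq β]
    {F : FreeGroup β →* FreeGroup α} (hF : Function.Injective F)
    (hU : IsNielsenReduced (Set.range fun l => F (FreeGroup.mk [l]))) (x : FreeGroup β) :
    x.norm ≤ (F x).norm := by
  have hchain : (x.toWord.map fun l => F (FreeGroup.mk [l])).IsChain (· * · ≠ 1) :=
    List.isChain_map _ |>.2 <| isReduced_toWord.imp fun a b h => by
      rw [← _root_.map_mul, map_ne_one_iff F hF]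
      exact FreeGroup.mk_singleton_mul_ne_one h
  have hprod : (x.toWord.map fun l => F (FreeGroup.mk [l])).prod = F x := by
    conv_rhs => rw [← mk_toWord (x := x), ← prod_map_mk_singleton, map_list_prod, List.map_map]
    rfl
  have hmem : ∀ y ∈ x.toWord.map fun l => F (FreeGroup.mk [l]),
      y ∈ Set.range fun l => F (FreeGroup.mk [l]) := by
    intro y hy
    obtain ⟨l, -, rfl⟩ := List.mem_map.1 hy
    exact ⟨l, rfl⟩
  simpa [hprod, norm] using hU.length_le_norm_prod hmem hchain

end NielsenReduced

section WordRank

variable [Fintype α]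

noncomputable def wordRank (L : List (α × Bool)) : ℕ :=
  Nat.ofDigits (Fintype.card (α × Bool) + 1) (L.map fun l => Fintype.equivFin _ l)

theorem wordRank_append (L₁ L₂ : List (α × Bool)) :
    wordRank (L₁ ++ L₂) =
      wordRank L₁ + (Fintype.card (α × Bool) + 1) ^ L₁.length * wordRank L₂ := by
  simp [wordRank, Nat.ofDigits_append]

theorem eq_of_wordRank_eq {L₁ L₂ : List (α × Bool)} (hlen : L₁.length = L₂.length)
    (h : wordRank L₁ = wordRank L₂) : L₁ = L₂ := by
  rcases isEmpty_or_nonempty α with hα | hα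
  · exact Subsingleton.elim L₁ L₂
  · refine List.map_injective_iff.2 (Fin.val_injective.comp (Fintype.equivFin _).injective)
      (Nat.ofDigits_inj_of_len_eq ?_ (by simpa using hlen) ?_ ?_ h)
    · simp [Fintype.card_pos]
    all_goals
      intro d hd
      obtain ⟨l, -, rfl⟩ := List.mem_map.1 hd
      exact Nat.lt_succ_of_lt (Fin.is_lt _)

end WordRank

section Complexity

variable [DecidableEq α] [Fintype α]

/-- The tie-breaker of Nielsen's reduction among elements of equal length. -/
noncomputable def weight (x : FreeGroup α) : ℕ :=
  wordRank (x.toWord.take (x.norm / 2)) + wordRank (x⁻¹.toWord.take (x.norm / 2))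

noncomputable def complexity (x : FreeGroup α) : ℕ ×ₗ ℕ := toLex (x.norm, weight x)

theorem complexity_inv (x : FreeGroup α) : complexity x⁻¹ = complexity x := by
  simp [complexity, weight, norm_inv_eq, add_comm]

/-- If `x = A p⁻¹` and `y = p q` with `|p| = |q|`, then `x y = A q` has the same first half as `x`,
so comparing complexities compares `p` with `q⁻¹`. -/
theorem wordRank_le_of_complexity_le {x y : FreeGroup α} {p q : List (α × Bool)}
    (hy : y.toWord = p ++ q) (hpq : p.length = q.length) (hp : invRev p <:+ x.toWord)
    (hnorm : y.norm ≤ (x * y).norm) (hle : complexity x ≤ complexity (x * y)) :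
    wordRank p ≤ wordRank (invRev q) := by
  obtain ⟨A, hA⟩ := hp
  have hxy : x * y = mk (A ++ q) := mul_eq_mk_of_cancel hA.symm (by rw [hy, invRev_invRev])
  have hx : x.norm = A.length + p.length := by rw [norm, ← hA]; simp
  have hxy_le : (x * y).norm ≤ A.length + q.length := by
    rw [hxy]
    exact norm_mk_le.trans_eq (List.length_append ..)
  rw [complexity, complexity, Prod.Lex.toLex_le_toLex] at hle
  obtain ⟨hxy_eq, hw⟩ : x.norm = (x * y).norm ∧ weight x ≤ weight (x * y) := by
    rcases hle with hlt | h
    · exact absurd hlt (by simp only; omega)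
    · exact h
  have hxyw : (x * y).toWord = A ++ q :=
    toWord_eq_of_mk_eq_of_length_le hxy.symm (by simp; omega)
  have hpA : p.length ≤ A.length := by
    have : y.norm = p.length + q.length := by rw [norm, hy, List.length_append]
    omega
  simp only [weight, toWord_inv, ← hA, hxyw, ← hxy_eq, hx, invRev_append, invRev_invRev,
    List.take_append] at hw
  have hA_half : (A.length + p.length) / 2 - A.length = 0 := by omega
  have hp_half : p.length ≤ (A.length + p.length) / 2 := by omega
  have hq_half : (invRev q).length ≤ (A.length + p.length) / 2 := by rwa [invRev_length, ← hpq]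
  simp only [hA_half, List.take_zero, List.append_nil, List.take_of_length_le hp_half,
    List.take_of_length_le hq_half, wordRank_append, invRev_length, ← hpq] at hw
  omega

end Complexity

section Automorphisms

theorem mulAut_ext {Φ Ψ : MulAut (FreeGroup α)} (h : ∀ a, Φ (of a) = Ψ (of a)) : Φ = Ψ :=
  MulEquiv.toMonoidHom_injective (ext_hom _ _ h)

theorem apply_inv_mk_singleton (Φ : MulAut (FreeGroup α)) (l : α × Bool) :
    Φ (mk [(l.1, !l.2)]) = (Φ (mk [l]))⁻¹ := by
  rw [← inv_mk_singleton, _root_.map_inv]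

def mulAutOfLift (f g : α → FreeGroup α) (hgf : ∀ a, lift g (f a) = of a)
    (hfg : ∀ a, lift f (g a) = of a) : MulAut (FreeGroup α) :=
  (lift f).toMulEquiv (lift g) (ext_hom _ _ (by simpa using hgf))
    (ext_hom _ _ (by simpa using hfg))

@[simp]
theorem mulAutOfLift_apply_of (f g : α → FreeGroup α) (hgf hfg) (a : α) :
    mulAutOfLift f g hgf hfg (of a) = f a := by
  simp [mulAutOfLift]

variable [DecidableEq α]

theorem apply_mk_singleton_ne_one (Φ : MulAut (FreeGroup α)) (l : α × Bool) :
    Φ (mk [l]) ≠ 1 := by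
  rw [map_ne_one_iff Φ Φ.injective, ← toWord_injective.ne_iff, toWord_mk_singleton, toWord_one]
  simp

theorem complexity_apply_mk_singleton [Fintype α] (Φ : MulAut (FreeGroup α)) (l : α × Bool) :
    complexity (Φ (mk [l])) = complexity (Φ (of l.1)) := by
  obtain ⟨a, _ | _⟩ := l
  · rw [mk_singleton_false, _root_.map_inv, complexity_inv]
  · rfl

def transvection {i j : α} (hij : i ≠ j) : MulAut (FreeGroup α) :=
  mulAutOfLift (fun k => if k = i then of i * of j else of k)
    (fun k => if k = i then of i * (of j)⁻¹ else of k)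
    (fun k => by split_ifs with hk <;> simp [hk, hij.symm])
    (fun k => by split_ifs with hk <;> simp [hk, hij.symm])

@[simp]
theorem transvection_apply_of {i j : α} (hij : i ≠ j) (k : α) :
    transvection hij (of k) = if k = i then of i * of j else of k :=
  mulAutOfLift_apply_of ..

def invertOn (T : Finset α) : MulAut (FreeGroup α) :=
  mulAutOfLift (fun k => if k ∈ T then (of k)⁻¹ else of k)
    (fun k => if k ∈ T then (of k)⁻¹ else of k)
    (fun k => by split_ifs with hk <;> simp [hk])
    (fun k => by split_ifs with hk <;> simp [hk])

@[simp]
theorem invertOn_apply_of (T : Finset α) (k : α) :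
    invertOn T (of k) = if k ∈ T then (of k)⁻¹ else of k :=
  mulAutOfLift_apply_of ..

theorem invertOn_apply_mk_singleton {T : Finset α} {l : α × Bool} (hl : l.1 ∉ T) :
    invertOn T (mk [l]) = mk [l] := by
  obtain ⟨k, _ | _⟩ := l
  · rw [mk_singleton_false, _root_.map_inv, invertOn_apply_of, if_neg hl]
  · rw [mk_singleton_true, invertOn_apply_of, if_neg hl]

end Automorphisms

section NielsenSubgroup

variable {n : ℕ}

def nielsenSubgroup (n : ℕ) : Subgroup (MulAut (FreeGroup (Fin n))) :=
  Subgroup.closure {ψ | IsElementaryNielsen ψ}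

theorem transvection_mem {i j : Fin n} (hij : i ≠ j) : transvection hij ∈ nielsenSubgroup n :=
  Subgroup.subset_closure (Or.inr (Or.inr ⟨i, j, hij, transvection_apply_of hij⟩))

theorem invertOn_mem (T : Finset (Fin n)) : invertOn T ∈ nielsenSubgroup n := by
  induction T using Finset.induction_on with
  | empty =>
    convert one_mem (nielsenSubgroup n)
    exact mulAut_ext fun k => by simp
  | insert a T ha ih =>
    have hsplit : invertOn (insert a T) = invertOn {a} * invertOn T := mulAut_ext fun k => by
      by_cases hk : k = a
      · subst hk
        simp [ha]
      · by_cases hkT : k ∈ T <;> simp [hk, hkT]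
    rw [hsplit]
    refine mul_mem (Subgroup.subset_closure (Or.inr (Or.inl ⟨a, fun k => ?_⟩))) ih
    split_ifs with hk <;> simp [hk]

theorem freeGroupCongr_mem (e : Equiv.Perm (Fin n)) :
    (freeGroupCongr e : MulAut (FreeGroup (Fin n))) ∈ nielsenSubgroup n := by
  induction e using Equiv.Perm.swap_induction_on with
  | one =>
    convert one_mem (nielsenSubgroup n)
    exact mulAut_ext fun k => by simp [freeGroupCongr_apply]
  | swap_mul f x y _ ih =>
    have hsplit : (freeGroupCongr (Equiv.swap x y * f) : MulAut (FreeGroup (Fin n))) =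
        freeGroupCongr (Equiv.swap x y) * freeGroupCongr f :=
      mulAut_ext fun k => by simp [freeGroupCongr_apply]
    rw [hsplit]
    refine mul_mem (Subgroup.subset_closure (Or.inl ⟨x, y, fun k => ?_⟩)) ih
    simp [freeGroupCongr_apply]

theorem exists_mem_nielsenSubgroup_apply_of {i j : Fin n} (hij : i ≠ j) (δ : Bool) :
    ∃ ρ ∈ nielsenSubgroup n, (∀ k ≠ i, ρ (of k) = of k) ∧ ρ (of i) = of i * mk [(j, δ)] := by
  cases δ
  · refine ⟨(transvection hij)⁻¹, inv_mem (transvection_mem hij), fun k hk => ?_, ?_⟩ <;>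
      rw [MulAut.inv_apply, MulEquiv.symm_apply_eq]
    · simp [hk]
    · simp [mk_singleton_false, hij.symm]
  · exact ⟨transvection hij, transvection_mem hij, fun k hk => by simp [hk],
      by simp [mk_singleton_true]⟩

theorem exists_mem_nielsenSubgroup_apply_mk_singleton {l m : Fin n × Bool} (hlm : l.1 ≠ m.1) :
    ∃ ψ ∈ nielsenSubgroup n, (∀ k ≠ l.1, ψ (of k) = of k) ∧ ψ (mk [l]) = mk [l] * mk [m] := by
  obtain ⟨i, ε⟩ := l
  obtain ⟨j, δ⟩ := m
  obtain ⟨ρ, hρ, hoff, hi⟩ := exists_mem_nielsenSubgroup_apply_of hlm δ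
  cases ε
  · -- `xᵢ ↦ xⱼ^(-δ) xᵢ` is `ρ` conjugated by the inversion of `xᵢ`.
    have hι := invertOn_mem {i}
    have hj : invertOn {i} (mk [(j, δ)]) = mk [(j, δ)] :=
      invertOn_apply_mk_singleton (by simpa using Ne.symm hlm)
    refine ⟨invertOn {i} * ρ * invertOn {i}, mul_mem (mul_mem hι hρ) hι,
      fun k hk => by simp [hk, hoff k hk], ?_⟩
    simp [mk_singleton_false, hi, hj]
  · exact ⟨ρ, hρ, hoff, by rwa [mk_singleton_true]⟩

theorem mem_nielsenSubgroup_of_apply_of_eq_mk_singleton {Ψ : MulAut (FreeGroup (Fin n))}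
    (h : ∀ i, ∃ l, Ψ (of i) = mk [l]) : Ψ ∈ nielsenSubgroup n := by
  choose l hl using h
  have hinj : Function.Injective fun i => (l i).1 := by
    intro i i' (hii' : (l i).1 = (l i').1)
    by_cases hs : (l i).2 = (l i').2
    · exact of_injective (Ψ.injective (by rw [hl, hl, Prod.ext hii' hs]))
    · have hinv : Ψ (of i') = Ψ (of i)⁻¹ := by
        rw [_root_.map_inv, hl, hl, inv_mk_singleton, hii', ← Bool.eq_not.2 (Ne.symm hs)]
      simpa [invRev] using congrArg toWord (Ψ.injective hinv)
  set e := Equiv.ofBijective _ (Finite.injective_iff_bijective.1 hinj)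
  set T := Finset.univ.filter fun i => (l i).2 = false
  have hΨ : Ψ = freeGroupCongr e * invertOn T := mulAut_ext fun i => by
    rw [hl, MulAut.mul_apply, invertOn_apply_of]
    rcases h : l i with ⟨a, _ | _⟩
    · simp [T, h, freeGroupCongr_apply, e, ← mk_singleton_false]
    · simp [T, h, freeGroupCongr_apply, e, ← mk_singleton_true]
  rw [hΨ]
  exact mul_mem (freeGroupCongr_mem e) (invertOn_mem T)

end NielsenSubgroup

section Minimal

variable {n : ℕ}

noncomputable def nielsenCost (Φ : MulAut (FreeGroup (Fin n))) : ℕ ×ₗ ℕ :=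
  toLex (∑ i, (Φ (of i)).norm, ∑ i, weight (Φ (of i)))

def IsNielsenMinimal (Φ : MulAut (FreeGroup (Fin n))) : Prop :=
  ∀ ψ ∈ nielsenSubgroup n, nielsenCost Φ ≤ nielsenCost (Φ * ψ)

theorem exists_isNielsenMinimal (φ : MulAut (FreeGroup (Fin n))) :
    ∃ ψ ∈ nielsenSubgroup n, IsNielsenMinimal (φ * ψ) := by
  obtain ⟨ψ, hψ, hmin⟩ := exists_minimalFor_of_wellFoundedLT (· ∈ nielsenSubgroup n)
    (fun ψ => nielsenCost (φ * ψ)) ⟨1, one_mem _⟩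
  refine ⟨ψ, hψ, fun χ hχ => ?_⟩
  rw [mul_assoc]
  exact (le_total _ _).elim (hmin (mul_mem hψ hχ)) id

namespace IsNielsenMinimal

variable {Φ : MulAut (FreeGroup (Fin n))} (hΦ : IsNielsenMinimal Φ)
include hΦ

theorem complexity_le {ψ : MulAut (FreeGroup (Fin n))} (hψ : ψ ∈ nielsenSubgroup n) {i : Fin n}
    (hoff : ∀ k ≠ i, (Φ * ψ) (of k) = Φ (of k)) :
    complexity (Φ (of i)) ≤ complexity ((Φ * ψ) (of i)) := by
  have hrest (f : FreeGroup (Fin n) → ℕ) :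
      ∑ k ∈ {i}ᶜ, f ((Φ * ψ) (of k)) = ∑ k ∈ {i}ᶜ, f (Φ (of k)) :=
    Finset.sum_congr rfl fun k hk => by rw [hoff k (by simpa using hk)]
  have h := hΦ ψ hψ
  rw [nielsenCost, nielsenCost, Fintype.sum_eq_add_sum_compl i, Fintype.sum_eq_add_sum_compl i,
    Fintype.sum_eq_add_sum_compl i (f := fun k => ((Φ * ψ) (of k)).norm),
    Fintype.sum_eq_add_sum_compl i (f := fun k => weight ((Φ * ψ) (of k))), hrest, hrest,
    Prod.Lex.toLex_le_toLex] at h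
  rw [complexity, complexity, Prod.Lex.toLex_le_toLex]
  omega

theorem complexity_le_mul {l m : Fin n × Bool} (hlm : l.1 ≠ m.1) :
    complexity (Φ (mk [l])) ≤ complexity (Φ (mk [l]) * Φ (mk [m])) := by
  obtain ⟨ψ, hψ, hoff, hl⟩ := exists_mem_nielsenSubgroup_apply_mk_singleton hlm
  have := hΦ.complexity_le hψ fun k hk => by rw [MulAut.mul_apply, hoff k hk]
  rwa [← complexity_apply_mk_singleton, ← complexity_apply_mk_singleton, MulAut.mul_apply, hl,
    _root_.map_mul] at this

theorem norm_le_norm_mul {l m : Fin n × Bool} (h : Φ (mk [l]) * Φ (mk [m]) ≠ 1) :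
    (Φ (mk [l])).norm ≤ (Φ (mk [l]) * Φ (mk [m])).norm := by
  by_cases hlm : l.1 = m.1
  · rcases mk_singleton_eq_or_eq_inv hlm with hm | hm <;> rw [hm] at h ⊢
    · exact norm_le_norm_mul_self _
    · exact absurd (by rw [_root_.map_inv, mul_inv_cancel]) h
  · have := hΦ.complexity_le_mul hlm
    rw [complexity, complexity, Prod.Lex.toLex_le_toLex] at this
    omega

theorem norm_le_norm_mul_right {l m : Fin n × Bool} (h : Φ (mk [l]) * Φ (mk [m]) ≠ 1) :
    (Φ (mk [m])).norm ≤ (Φ (mk [l]) * Φ (mk [m])).norm := by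
  have := hΦ.norm_le_norm_mul (l := (m.1, !m.2)) (m := (l.1, !l.2))
    (by rwa [apply_inv_mk_singleton, apply_inv_mk_singleton, ← mul_inv_rev, inv_ne_one])
  rwa [apply_inv_mk_singleton, apply_inv_mk_singleton, ← mul_inv_rev, norm_inv_eq,
    norm_inv_eq] at this

theorem wordRank_le {l m : Fin n × Bool} (hlm : l.1 ≠ m.1)
    (h : Φ (mk [l]) * Φ (mk [m]) ≠ 1) {p q : List (Fin n × Bool)}
    (hv : (Φ (mk [m])).toWord = p ++ q) (hpq : p.length = q.length)
    (hp : invRev p <:+ (Φ (mk [l])).toWord) : wordRank p ≤ wordRank (invRev q) :=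
  wordRank_le_of_complexity_le hv hpq hp (hΦ.norm_le_norm_mul_right h) (hΦ.complexity_le_mul hlm)

theorem not_cancel_halves {l m r : Fin n × Bool} (hlm : Φ (mk [l]) * Φ (mk [m]) ≠ 1)
    (hmr : Φ (mk [m]) * Φ (mk [r]) ≠ 1) {p q : List (Fin n × Bool)}
    (hv : (Φ (mk [m])).toWord = p ++ q) (hpq : p.length = q.length)
    (hp : invRev p <:+ (Φ (mk [l])).toWord) : ¬ invRev q <+: (Φ (mk [r])).toWord := by
  intro hq
  have hp_ne : p ≠ [] := by
    rintro rfl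
    obtain rfl : q = [] := List.length_eq_zero_iff.1 hpq.symm
    exact apply_mk_singleton_ne_one Φ m (toWord_eq_nil_iff.1 hv)
  suffices q = invRev p by
    have hred : IsReduced (invRev (invRev p) ++ invRev p) := by
      rw [invRev_invRev, ← this, ← hv]
      exact isReduced_toWord
    exact hp_ne (by simpa [invRev] using hred.eq_nil_of_invRev_append)
  by_cases hl : l.1 = m.1
  · rcases mk_singleton_eq_or_eq_inv hl with hm | hm
    · rw [← hm, hv] at hp
      exact (List.suffix_of_suffix_length_le (List.suffix_append p q) hp
        (by simp [hpq])).eq_of_length (by simp [hpq])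
    · exact absurd (by rw [hm, _root_.map_inv, mul_inv_cancel]) hlm
  by_cases hr : m.1 = r.1
  · rcases mk_singleton_eq_or_eq_inv hr with hm | hm
    · rw [hm, hv] at hq
      rw [← (List.prefix_of_prefix_length_le hq (List.prefix_append p q)
        (by simp [hpq])).eq_of_length (by simp [hpq]), invRev_invRev]
    · exact absurd (by rw [hm, _root_.map_inv, mul_inv_cancel]) hmr
  -- The tie-breaker compares `p` with `q⁻¹` in both directions: at `(u, v)` and at `(w⁻¹, v⁻¹)`.
  have h₁ := hΦ.wordRank_le hl hlm hv hpq hp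
  have h₂ := hΦ.wordRank_le (l := (r.1, !r.2)) (m := (m.1, !m.2)) (Ne.symm hr)
    (by rwa [apply_inv_mk_singleton, apply_inv_mk_singleton, ← mul_inv_rev, inv_ne_one])
    (by rw [apply_inv_mk_singleton, toWord_inv, hv, invRev_append]) (by simp [hpq])
    (by
      obtain ⟨c, hc⟩ := hq
      exact ⟨invRev c, by rw [apply_inv_mk_singleton, toWord_inv, ← hc, invRev_append,
        invRev_invRev]⟩)
  rw [invRev_invRev] at h₂
  rw [eq_of_wordRank_eq (by simp [hpq]) (le_antisymm h₁ h₂), invRev_invRev]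

theorem isNielsenReduced : IsNielsenReduced (Set.range fun l => Φ (mk [l])) where
  one_notMem := fun ⟨l, hl⟩ => apply_mk_singleton_ne_one Φ l hl
  norm_le_norm_mul := by
    rintro _ ⟨l, rfl⟩ _ ⟨m, rfl⟩ h
    exact ⟨hΦ.norm_le_norm_mul h, hΦ.norm_le_norm_mul_right h⟩
  not_cancel_halves := by
    rintro _ ⟨l, rfl⟩ _ ⟨m, rfl⟩ _ ⟨r, rfl⟩ hlm hmr p q hv hpq hp
    exact hΦ.not_cancel_halves hlm hmr hv hpq hp

theorem inv_mem : Φ⁻¹ ∈ nielsenSubgroup n := by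
  refine mem_nielsenSubgroup_of_apply_of_eq_mk_singleton fun j => ?_
  have hle := hΦ.isNielsenReduced.norm_le_norm_apply (F := Φ.toMonoidHom) Φ.injective
    (Φ⁻¹ (of j))
  have hΦj : Φ (Φ⁻¹ (of j)) = of j := by rw [MulAut.inv_apply, MulEquiv.apply_symm_apply]
  have hne : Φ⁻¹ (of j) ≠ 1 := fun h => of_ne_one j (by rw [← hΦj, h, _root_.map_one])
  have hone : (Φ⁻¹ (of j)).norm = 1 :=
    le_antisymm (by simpa [hΦj] using hle) (Nat.one_le_iff_ne_zero.2 (norm_eq_zero.not.2 hne))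
  obtain ⟨l, hl⟩ := List.length_eq_one_iff.1 hone
  exact ⟨l, by rw [← mk_toWord (x := Φ⁻¹ (of j)), hl]⟩

end IsNielsenMinimal

end Minimal

end FreeGroup

/-- Every automorphism of the free group `F_n` is a finite composition of
elementary Nielsen transformations. -/
theorem nielsen_reduction (n : ℕ) (φ : MulAut (FreeGroup (Fin n))) :
    φ ∈ Subgroup.closure {ψ : MulAut (FreeGroup (Fin n)) | IsElementaryNielsen ψ} := by
  obtain ⟨ψ, hψ, hmin⟩ := FreeGroup.exists_isNielsenMinimal φ
  show φ ∈ FreeGroup.nielsenSubgroup n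
  simpa using mul_mem (inv_mem hmin.inv_mem) (inv_mem hψ)
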